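/- Let u(x) = [β(x); γ(x)] be an absolutely continuous m×m matrix function on [0,T] with blocks β = [β₁ β₂] (m₁×m₁ and m₁×m₂) and γ = [γ₁ γ₂] (m₂×m₁ and m₂×m₂) such that β j β* ≡ I_{m₁}, γ j γ* ≡ −I_{m₂}, β j γ* ≡ 0, β' j β* = 0 a.e., and β(0) = [I_{m₁} 0]. Set β̃(x) = [I_{m₁} γ₁(x)*(γ₂(x)*)⁻¹]. Then β(x) = β₁(x)β̃(x) for every x, β₁(x) is invertible with β̃(x) j β̃(x)* = β₁(x)⁻¹(β₁(x)*)⁻¹, and β₁ satisfies the first-order differential equation β₁' = −β₁ (β̃' j β̃*)(β̃ j β̃*)⁻¹ almost everywhere with β₁(0) = I_{m₁}. -/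

import Mathlib

/-! The constraint `γ j γ* = -I` reads `γ₂ γ₂* = I + γ₁ γ₁*`, so `γ₂` is invertible, and
`β j γ* = 0` then gives `β₂ = β₁ γ₁* (γ₂*)⁻¹`, i.e. `β = β₁ β̃`. Likewise `β j β* = I` makes `β₁`
invertible, and `β₁ (β̃ j β̃*) β₁* = I` identifies `β̃ j β̃*`. Wherever `β` and `γ` are
differentiable, so is `β̃` (Cramer's rule for `(γ₂*)⁻¹`); the product rule gives
`β' = β₁' β̃ + β₁ β̃'`, and substituting this into `β' j β* = 0` and cancelling `β₁*` solves
for `β₁'`. -/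

open MeasureTheory Matrix ComplexOrder

noncomputable section

/-- The signature matrix `j = diag(I_{m₁}, -I_{m₂})`. -/
def Jm (m₁ m₂ : ℕ) : Matrix (Fin m₁ ⊕ Fin m₂) (Fin m₁ ⊕ Fin m₂) ℂ :=
  Matrix.fromBlocks 1 0 0 (-1)

/-- Horizontal concatenation `[A B]` of an `k × m₁` and a `k × m₂` matrix. -/
def hcat {k m₁ m₂ : ℕ} (A : Matrix (Fin k) (Fin m₁) ℂ) (B : Matrix (Fin k) (Fin m₂) ℂ) :
    Matrix (Fin k) (Fin m₁ ⊕ Fin m₂) ℂ :=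
  Matrix.of fun i => Sum.elim (A i) (B i)

/-- The auxiliary row `β̃(x) = [I_{m₁}  γ₁(x)*(γ₂(x)*)⁻¹]` built from
`γ = [γ₁ γ₂]`. -/
def βtil {m₁ m₂ : ℕ} (γ : ℝ → Matrix (Fin m₂) (Fin m₁ ⊕ Fin m₂) ℂ) (x : ℝ) :
    Matrix (Fin m₁) (Fin m₁ ⊕ Fin m₂) ℂ :=
  hcat 1 (((γ x).submatrix id Sum.inl)ᴴ * ((((γ x).submatrix id Sum.inr))ᴴ)⁻¹)

section BlockAlgebra

variable {k l m₁ m₂ : ℕ}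

lemma hcat_submatrix_inl_submatrix_inr (M : Matrix (Fin k) (Fin m₁ ⊕ Fin m₂) ℂ) :
    hcat (M.submatrix id Sum.inl) (M.submatrix id Sum.inr) = M := by
  ext i (j | j) <;> rfl

lemma mul_hcat (C : Matrix (Fin l) (Fin k) ℂ) (A : Matrix (Fin k) (Fin m₁) ℂ)
    (B : Matrix (Fin k) (Fin m₂) ℂ) : C * hcat A B = hcat (C * A) (C * B) := by
  ext i (j | j) <;> simp [hcat, mul_apply]

lemma mul_Jm_mul_conjTranspose (M : Matrix (Fin k) (Fin m₁ ⊕ Fin m₂) ℂ)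
    (N : Matrix (Fin l) (Fin m₁ ⊕ Fin m₂) ℂ) :
    M * Jm m₁ m₂ * Nᴴ = M.submatrix id Sum.inl * (N.submatrix id Sum.inl)ᴴ
      - M.submatrix id Sum.inr * (N.submatrix id Sum.inr)ᴴ := by
  rw [Jm, ← hcat_submatrix_inl_submatrix_inr M, ← hcat_submatrix_inl_submatrix_inr N]
  ext i j
  simp [hcat, mul_apply, Fintype.sum_sum_type, fromBlocks, one_apply, sub_eq_add_neg]

end BlockAlgebra

lemma isUnit_of_mul_conjTranspose_eq_one_add {𝕜 n p : Type*} [RCLike 𝕜] [Fintype n]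
    [DecidableEq n] [Fintype p] {A : Matrix n n 𝕜} (B : Matrix n p 𝕜)
    (h : A * Aᴴ = 1 + B * Bᴴ) : IsUnit A := by
  have hpos : (A * Aᴴ).PosDef :=
    h ▸ PosDef.one.add_posSemidef (posSemidef_self_mul_conjTranspose B)
  exact isUnit_of_mul_isUnit_left hpos.isUnit

section Pointwise

variable {m₁ m₂ : ℕ} {b : Matrix (Fin m₁) (Fin m₁ ⊕ Fin m₂) ℂ}
  {g : Matrix (Fin m₂) (Fin m₁ ⊕ Fin m₂) ℂ}

lemma isUnit_submatrix_inl_of_mul_Jm_mul_conjTranspose_eq_one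
    (hb : b * Jm m₁ m₂ * bᴴ = 1) : IsUnit (b.submatrix id Sum.inl) := by
  rw [mul_Jm_mul_conjTranspose] at hb
  exact isUnit_of_mul_conjTranspose_eq_one_add _ (eq_add_of_sub_eq hb)

lemma isUnit_submatrix_inr_of_mul_Jm_mul_conjTranspose_eq_neg_one
    (hg : g * Jm m₁ m₂ * gᴴ = -1) : IsUnit (g.submatrix id Sum.inr) := by
  rw [mul_Jm_mul_conjTranspose, ← neg_sub, neg_inj] at hg
  exact isUnit_of_mul_conjTranspose_eq_one_add _ (eq_add_of_sub_eq hg)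

lemma eq_submatrix_inl_mul_βtil {γ : ℝ → Matrix (Fin m₂) (Fin m₁ ⊕ Fin m₂) ℂ} {x : ℝ}
    (hγ : γ x * Jm m₁ m₂ * (γ x)ᴴ = -1) (hbγ : b * Jm m₁ m₂ * (γ x)ᴴ = 0) :
    b = b.submatrix id Sum.inl * βtil γ x := by
  have hγ₂ : IsUnit ((γ x).submatrix id Sum.inr)ᴴ.det := by
    rw [← isUnit_iff_isUnit_det, isUnit_conjTranspose]
    exact isUnit_submatrix_inr_of_mul_Jm_mul_conjTranspose_eq_neg_one hγ
  rw [mul_Jm_mul_conjTranspose, sub_eq_zero] at hbγ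
  rw [βtil, mul_hcat, mul_one, ← Matrix.mul_assoc, hbγ, mul_nonsing_inv_cancel_right _ _ hγ₂,
    hcat_submatrix_inl_submatrix_inr]

lemma eq_nonsing_inv_mul_conjTranspose_nonsing_inv {n K : Type*} [Fintype n] [DecidableEq n]
    [CommRing K] [StarRing K] {A S : Matrix n n K} (hA : IsUnit A) (h : A * S * Aᴴ = 1) :
    S = A⁻¹ * A⁻¹ᴴ := by
  have hAd : IsUnit A.det := (isUnit_iff_isUnit_det A).mp hA
  have hAHd : IsUnit Aᴴ.det := (isUnit_iff_isUnit_det _).mp ((isUnit_conjTranspose A).mpr hA)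
  calc S = A⁻¹ * (A * S) * Aᴴ * Aᴴ⁻¹ := by
        rw [mul_nonsing_inv_cancel_right _ _ hAHd, nonsing_inv_mul_cancel_left _ _ hAd]
    _ = A⁻¹ * (A * S * Aᴴ) * Aᴴ⁻¹ := by simp only [Matrix.mul_assoc]
    _ = A⁻¹ * A⁻¹ᴴ := by rw [h, Matrix.mul_one, conjTranspose_nonsing_inv]

lemma βtil_mul_Jm_mul_conjTranspose {γ : ℝ → Matrix (Fin m₂) (Fin m₁ ⊕ Fin m₂) ℂ} {x : ℝ}
    (hb : b * Jm m₁ m₂ * bᴴ = 1) (hγ : γ x * Jm m₁ m₂ * (γ x)ᴴ = -1)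
    (hbγ : b * Jm m₁ m₂ * (γ x)ᴴ = 0) :
    βtil γ x * Jm m₁ m₂ * (βtil γ x)ᴴ
      = (b.submatrix id Sum.inl)⁻¹ * (b.submatrix id Sum.inl)⁻¹ᴴ := by
  refine eq_nonsing_inv_mul_conjTranspose_nonsing_inv
    (isUnit_submatrix_inl_of_mul_Jm_mul_conjTranspose_eq_one hb) ?_
  rw [eq_submatrix_inl_mul_βtil hγ hbγ, conjTranspose_mul] at hb
  simpa only [Matrix.mul_assoc] using hb

end Pointwise

section Differentiability

variable {𝕜 𝕜' : Type*} [NontriviallyNormedField 𝕜] [NormedField 𝕜'] [NormedAlgebra 𝕜 𝕜']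
  {n : Type*} [Fintype n] [DecidableEq n] {M : 𝕜 → Matrix n n 𝕜'} {x : 𝕜}

lemma differentiableAt_det (hM : ∀ i j, DifferentiableAt 𝕜 (fun s => M s i j) x) :
    DifferentiableAt 𝕜 (fun s => (M s).det) x := by
  simp only [det_apply]
  exact DifferentiableAt.fun_sum fun σ _ =>
    (DifferentiableAt.fun_finsetProd fun i _ => hM (σ i) i).const_smul _

lemma differentiableAt_nonsing_inv_apply (hM : ∀ i j, DifferentiableAt 𝕜 (fun s => M s i j) x)
    (hMx : IsUnit (M x)) (i j : n) :
    DifferentiableAt 𝕜 (fun s => (M s)⁻¹ i j) x := by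
  simp only [inv_def, Matrix.smul_apply, adjugate_apply, Ring.inverse_eq_inv', smul_eq_mul]
  refine ((differentiableAt_det hM).inv ((isUnit_iff_isUnit_det _).mp hMx).ne_zero).mul
    (differentiableAt_det fun a b => ?_)
  by_cases ha : a = j
  · simp [updateRow_apply, ha]
  · simpa [updateRow_apply, ha] using hM a b

end Differentiability

section ProductRule

variable {𝕜 𝔸 : Type*} [NontriviallyNormedField 𝕜] [NormedRing 𝔸] [NormedAlgebra 𝕜 𝔸]
  {l m n : Type*} [Fintype m] {A : 𝕜 → Matrix l m 𝔸} {B : 𝕜 → Matrix m n 𝔸}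
  {A' : Matrix l m 𝔸} {B' : Matrix m n 𝔸} {x : 𝕜}

lemma hasDerivAt_mul_apply (hA : ∀ i k, HasDerivAt (fun s => A s i k) (A' i k) x)
    (hB : ∀ k j, HasDerivAt (fun s => B s k j) (B' k j) x) (i : l) (j : n) :
    HasDerivAt (fun s => (A s * B s) i j) ((A' * B x + A x * B') i j) x := by
  simp only [mul_apply, Matrix.add_apply, ← Finset.sum_add_distrib]
  exact HasDerivAt.fun_sum fun k _ => (hA i k).mul (hB k j)

lemma eq_mul_add_mul_of_hasDerivAt_of_eventuallyEq_mul {C : 𝕜 → Matrix l n 𝔸}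
    {C' : Matrix l n 𝔸} (hC : ∀ i j, HasDerivAt (fun s => C s i j) (C' i j) x)
    (hCAB : C =ᶠ[nhds x] fun s => A s * B s)
    (hA : ∀ i k, HasDerivAt (fun s => A s i k) (A' i k) x)
    (hB : ∀ k j, HasDerivAt (fun s => B s k j) (B' k j) x) :
    C' = A' * B x + A x * B' := by
  ext i j
  refine (hC i j).unique ((hasDerivAt_mul_apply hA hB i j).congr_of_eventuallyEq ?_)
  filter_upwards [hCAB] with s hs
  rw [hs]

end ProductRule

lemma eq_neg_mul_mul_nonsing_inv_of_mul_conjTranspose_eq_zero {k n K : Type*} [Fintype k]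
    [DecidableEq k] [Fintype n] [CommRing K] [StarRing K] {A D : Matrix k k K}
    {B B' : Matrix k n K} {J : Matrix n n K} (hA : IsUnit A) (hS : IsUnit (B * J * Bᴴ))
    (h : (D * B + A * B') * J * (A * B)ᴴ = 0) :
    D = -A * (B' * J * Bᴴ) * (B * J * Bᴴ)⁻¹ := by
  have hAHd : IsUnit Aᴴ.det := (isUnit_iff_isUnit_det _).mp ((isUnit_conjTranspose A).mpr hA)
  have hSd : IsUnit (B * J * Bᴴ).det := (isUnit_iff_isUnit_det _).mp hS
  have hsum : D * (B * J * Bᴴ) + A * (B' * J * Bᴴ) = 0 := by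
    rw [← mul_nonsing_inv_cancel_right _ (D * (B * J * Bᴴ) + A * (B' * J * Bᴴ)) hAHd,
      ← Matrix.zero_mul Aᴴ⁻¹, ← h, conjTranspose_mul]
    simp only [Matrix.add_mul, Matrix.mul_assoc]
  calc D = D * (B * J * Bᴴ) * (B * J * Bᴴ)⁻¹ := (mul_nonsing_inv_cancel_right _ _ hSd).symm
    _ = -A * (B' * J * Bᴴ) * (B * J * Bᴴ)⁻¹ := by
      rw [eq_neg_of_add_eq_zero_left hsum]
      simp only [Matrix.neg_mul]

lemma differentiableAt_βtil_apply {m₁ m₂ : ℕ} {γ : ℝ → Matrix (Fin m₂) (Fin m₁ ⊕ Fin m₂) ℂ}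
    {x : ℝ} (hγ : ∀ i j, DifferentiableAt ℝ (fun s => γ s i j) x)
    (hγ₂ : IsUnit ((γ x).submatrix id Sum.inr)) (a : Fin m₁) :
    ∀ b, DifferentiableAt ℝ (fun s => βtil γ s a b) x
  | .inl _ => differentiableAt_const _
  | .inr c => by
    simp only [βtil, hcat, of_apply, Sum.elim_inr, mul_apply, conjTranspose_apply,
      submatrix_apply, id]
    exact DifferentiableAt.fun_sum fun k _ => (hγ k (Sum.inl a)).star.mul
      (differentiableAt_nonsing_inv_apply (fun i j => (hγ j (Sum.inr i)).star)
        ((isUnit_conjTranspose _).mpr hγ₂) k c)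

lemma exists_hasDerivAt_βtil_and_eq_neg_mul {m₁ m₂ : ℕ}
    {β : ℝ → Matrix (Fin m₁) (Fin m₁ ⊕ Fin m₂) ℂ} {γ : ℝ → Matrix (Fin m₂) (Fin m₁ ⊕ Fin m₂) ℂ}
    {β' : Matrix (Fin m₁) (Fin m₁ ⊕ Fin m₂) ℂ} {γ' : Matrix (Fin m₂) (Fin m₁ ⊕ Fin m₂) ℂ}
    {x : ℝ} {U : Set ℝ} (hU : U ∈ nhds x)
    (hβ' : ∀ a b, HasDerivAt (fun s => β s a b) (β' a b) x)
    (hγ' : ∀ a b, HasDerivAt (fun s => γ s a b) (γ' a b) x)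
    (hβj : β x * Jm m₁ m₂ * (β x)ᴴ = 1) (hγj : ∀ s ∈ U, γ s * Jm m₁ m₂ * (γ s)ᴴ = -1)
    (hβγ : ∀ s ∈ U, β s * Jm m₁ m₂ * (γ s)ᴴ = 0) (hβ'j : β' * Jm m₁ m₂ * (β x)ᴴ = 0) :
    ∃ Bd : Matrix (Fin m₁) (Fin m₁ ⊕ Fin m₂) ℂ,
      (∀ a b, HasDerivAt (fun s => βtil γ s a b) (Bd a b) x) ∧
      β'.submatrix id Sum.inl = -((β x).submatrix id Sum.inl) *
        (Bd * Jm m₁ m₂ * (βtil γ x)ᴴ) * (βtil γ x * Jm m₁ m₂ * (βtil γ x)ᴴ)⁻¹ := by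
  have hxU := mem_of_mem_nhds hU
  have hβtil := differentiableAt_βtil_apply (fun i j => (hγ' i j).differentiableAt)
    (isUnit_submatrix_inr_of_mul_Jm_mul_conjTranspose_eq_neg_one (hγj x hxU))
  set Bd := Matrix.of fun a b => deriv (fun s => βtil γ s a b) x
  have hBd : ∀ a b, HasDerivAt (fun s => βtil γ s a b) (Bd a b) x :=
    fun a b => (hβtil a b).hasDerivAt
  have hfactor : ∀ s ∈ U, β s = (β s).submatrix id Sum.inl * βtil γ s :=
    fun s hs => eq_submatrix_inl_mul_βtil (hγj s hs) (hβγ s hs)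
  have hβ'_eq : β' = β'.submatrix id Sum.inl * βtil γ x + (β x).submatrix id Sum.inl * Bd :=
    eq_mul_add_mul_of_hasDerivAt_of_eventuallyEq_mul (A := fun s => (β s).submatrix id Sum.inl)
      (B := βtil γ) hβ' (Filter.eventually_of_mem hU hfactor) (fun i k => hβ' i (Sum.inl k)) hBd
  have hβ₁ := isUnit_submatrix_inl_of_mul_Jm_mul_conjTranspose_eq_one hβj
  have hβ₁inv := isUnit_nonsing_inv_iff.mpr hβ₁
  refine ⟨Bd, hBd, eq_neg_mul_mul_nonsing_inv_of_mul_conjTranspose_eq_zero hβ₁ ?_ ?_⟩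
  · rw [βtil_mul_Jm_mul_conjTranspose hβj (hγj x hxU) (hβγ x hxU)]
    exact hβ₁inv.mul ((isUnit_conjTranspose _).mpr hβ₁inv)
  · rwa [← hβ'_eq, ← hfactor x hxU]

theorem beta_one_recovery_ode_general
    {m₁ m₂ : ℕ} (T : ℝ)
    (β βd : ℝ → Matrix (Fin m₁) (Fin m₁ ⊕ Fin m₂) ℂ)
    (γ γd : ℝ → Matrix (Fin m₂) (Fin m₁ ⊕ Fin m₂) ℂ)
    (hDerivβ : ∀ᵐ x ∂(volume.restrict (Set.Icc (0 : ℝ) T)), ∀ a b,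
      HasDerivAt (fun s => β s a b) (βd x a b) x)
    (hDerivγ : ∀ᵐ x ∂(volume.restrict (Set.Icc (0 : ℝ) T)), ∀ a b,
      HasDerivAt (fun s => γ s a b) (γd x a b) x)
    (hβj : ∀ x ∈ Set.Icc (0 : ℝ) T, β x * Jm m₁ m₂ * (β x)ᴴ = 1)
    (hγj : ∀ x ∈ Set.Icc (0 : ℝ) T, γ x * Jm m₁ m₂ * (γ x)ᴴ = -1)
    (hβγ : ∀ x ∈ Set.Icc (0 : ℝ) T, β x * Jm m₁ m₂ * (γ x)ᴴ = 0)
    (hβdj : ∀ᵐ x ∂(volume.restrict (Set.Icc (0 : ℝ) T)),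
      βd x * Jm m₁ m₂ * (β x)ᴴ = 0)
    (hβ0 : β 0 = hcat (1 : Matrix (Fin m₁) (Fin m₁) ℂ) 0) :
    (∀ x ∈ Set.Icc (0 : ℝ) T,
      β x = (β x).submatrix id Sum.inl * βtil γ x) ∧
    (∀ x ∈ Set.Icc (0 : ℝ) T, IsUnit ((β x).submatrix id Sum.inl)) ∧
    (∀ x ∈ Set.Icc (0 : ℝ) T,
      βtil γ x * Jm m₁ m₂ * (βtil γ x)ᴴ
        = ((β x).submatrix id Sum.inl)⁻¹ * (((β x).submatrix id Sum.inl)⁻¹)ᴴ) ∧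
    ((β 0).submatrix id Sum.inl = 1) ∧
    (∀ᵐ x ∂(volume.restrict (Set.Icc (0 : ℝ) T)),
      ∃ Bd : Matrix (Fin m₁) (Fin m₁ ⊕ Fin m₂) ℂ,
        (∀ a b, HasDerivAt (fun s => βtil γ s a b) (Bd a b) x) ∧
        (βd x).submatrix id Sum.inl
          = -((β x).submatrix id Sum.inl) *
              (Bd * Jm m₁ m₂ * (βtil γ x)ᴴ) *
              (βtil γ x * Jm m₁ m₂ * (βtil γ x)ᴴ)⁻¹) := by
  refine ⟨fun x hx => eq_submatrix_inl_mul_βtil (hγj x hx) (hβγ x hx),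
    fun x hx => isUnit_submatrix_inl_of_mul_Jm_mul_conjTranspose_eq_one (hβj x hx),
    fun x hx => βtil_mul_Jm_mul_conjTranspose (hβj x hx) (hγj x hx) (hβγ x hx),
    by ext i j; simp [hβ0, hcat], ?_⟩
  -- at interior points `Icc 0 T` is a neighbourhood, and the endpoints are null
  rw [← restrict_Ioo_eq_restrict_Icc] at hDerivβ hDerivγ hβdj ⊢
  filter_upwards [hDerivβ, hDerivγ, hβdj, ae_restrict_mem measurableSet_Ioo]
    with x hβx hγx hβdx hx
  exact exists_hasDerivAt_βtil_and_eq_neg_mul (Icc_mem_nhds hx.1 hx.2) hβx hγx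
    (hβj x (Set.Ioo_subset_Icc_self hx)) hγj hβγ hβdx

/-- for `u = [β; γ]` absolutely continuous with `β j β* ≡ I`,
`γ j γ* ≡ -I`, `β j γ* ≡ 0`, `β' j β* = 0` a.e. and `β(0) = [I 0]`, one has
`β = β₁ β̃`, `β₁` invertible with `β̃ j β̃* = β₁⁻¹(β₁*)⁻¹`, and `β₁` solves
`β₁' = -β₁ (β̃' j β̃*)(β̃ j β̃*)⁻¹`, `β₁(0) = I`. -/
theorem beta_one_recovery_ode
    {m₁ m₂ : ℕ} (T : ℝ) (hT : 0 < T)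
    (β βd : ℝ → Matrix (Fin m₁) (Fin m₁ ⊕ Fin m₂) ℂ)
    (γ γd : ℝ → Matrix (Fin m₂) (Fin m₁ ⊕ Fin m₂) ℂ)
    (hIntβ : ∀ a b, IntervalIntegrable (fun t => βd t a b) volume 0 T)
    (hRepβ : ∀ x ∈ Set.Icc (0 : ℝ) T, ∀ a b,
      β x a b = β 0 a b + ∫ t in (0:ℝ)..x, βd t a b)
    (hDerivβ : ∀ᵐ x ∂(volume.restrict (Set.Icc (0 : ℝ) T)), ∀ a b,
      HasDerivAt (fun s => β s a b) (βd x a b) x)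
    (hIntγ : ∀ a b, IntervalIntegrable (fun t => γd t a b) volume 0 T)
    (hRepγ : ∀ x ∈ Set.Icc (0 : ℝ) T, ∀ a b,
      γ x a b = γ 0 a b + ∫ t in (0:ℝ)..x, γd t a b)
    (hDerivγ : ∀ᵐ x ∂(volume.restrict (Set.Icc (0 : ℝ) T)), ∀ a b,
      HasDerivAt (fun s => γ s a b) (γd x a b) x)
    (hβj : ∀ x ∈ Set.Icc (0 : ℝ) T, β x * Jm m₁ m₂ * (β x)ᴴ = 1)
    (hγj : ∀ x ∈ Set.Icc (0 : ℝ) T, γ x * Jm m₁ m₂ * (γ x)ᴴ = -1)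
    (hβγ : ∀ x ∈ Set.Icc (0 : ℝ) T, β x * Jm m₁ m₂ * (γ x)ᴴ = 0)
    (hβdj : ∀ᵐ x ∂(volume.restrict (Set.Icc (0 : ℝ) T)),
      βd x * Jm m₁ m₂ * (β x)ᴴ = 0)
    (hβ0 : β 0 = hcat (1 : Matrix (Fin m₁) (Fin m₁) ℂ) 0) :
    (∀ x ∈ Set.Icc (0 : ℝ) T,
      β x = (β x).submatrix id Sum.inl * βtil γ x) ∧
    (∀ x ∈ Set.Icc (0 : ℝ) T, IsUnit ((β x).submatrix id Sum.inl)) ∧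
    (∀ x ∈ Set.Icc (0 : ℝ) T,
      βtil γ x * Jm m₁ m₂ * (βtil γ x)ᴴ
        = ((β x).submatrix id Sum.inl)⁻¹ * (((β x).submatrix id Sum.inl)⁻¹)ᴴ) ∧
    ((β 0).submatrix id Sum.inl = 1) ∧
    (∀ᵐ x ∂(volume.restrict (Set.Icc (0 : ℝ) T)),
      ∃ Bd : Matrix (Fin m₁) (Fin m₁ ⊕ Fin m₂) ℂ,
        (∀ a b, HasDerivAt (fun s => βtil γ s a b) (Bd a b) x) ∧
        (βd x).submatrix id Sum.inl
          = -((β x).submatrix id Sum.inl) *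
              (Bd * Jm m₁ m₂ * (βtil γ x)ᴴ) *
              (βtil γ x * Jm m₁ m₂ * (βtil γ x)ᴴ)⁻¹) :=
  beta_one_recovery_ode_general T β βd γ γd hDerivβ hDerivγ hβj hγj hβγ hβdj hβ0
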